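/- Let A be a complex-linear operator on a two-dimensional complex vector space V, symmetric with respect to a non-degenerate symmetric complex bilinear form g. Then there exists a g-orthonormal basis {e₁, e₂} of V with respect to which the matrix of A is either diagonal, diag(α, β), or of the form [[α+1, i],[i, α−1]] for some α, β ∈ ℂ. -/

import Mathlib

/-!
Take an eigenvector `v` of `A`. If `g v v ≠ 0`, normalise it: its `g`-orthogonal complement is an
`A`-invariant line, and a normalised vector spanning it gives a diagonalising orthonormal basis.
If `v` is isotropic, complete it to a hyperbolic pair `(v, w)` (`g v w = 1`, `g w w = 0`); symmetry
of `A` forces `A w = μ v + α w`, and rescaling the pair makes `μ = 0` or `μ = 2`. The change of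
basis `a = (f + h) / √2`, `c = i (h - f) / √2` turns a hyperbolic pair `(f, h)` into an orthonormal
one, and the block `[[α, 2], [0, α]]` into `[[α + 1, i], [i, α - 1]]`.
-/

open Module

theorem Module.Dual.exists_ker_eq_span_singleton {K V : Type*} [Field K] [AddCommGroup V]
    [Module K V] [FiniteDimensional K V] (hdim : finrank K V = 2) {f : Module.Dual K V}
    (hf : f ≠ 0) : ∃ w ≠ 0, LinearMap.ker f = K ∙ w := by
  have hker : finrank K (LinearMap.ker f) = 1 := by
    have := Module.Dual.finrank_ker_add_one_of_ne_zero hf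
    omega
  obtain ⟨w, hw, hw0⟩ := Submodule.exists_mem_ne_zero_of_ne_bot (p := LinearMap.ker f) fun h => by
    rw [h, finrank_bot] at hker
    exact zero_ne_one hker
  exact ⟨w, hw0, eq_span_singleton_of_mem_of_finrank_eq_one hker hw hw0⟩

def Module.End.IsNormalFormPair {K V : Type*} [Field K] [AddCommGroup V] [Module K V]
    (A : Module.End K V) (i : K) (a c : V) : Prop :=
  (∃ α β : K, A a = α • a ∧ A c = β • c) ∨
    (∃ α : K, A a = (α + 1) • a + i • c ∧ A c = i • a + (α - 1) • c)

open Module.End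

theorem Module.End.isNormalFormPair_of_jordan {K V : Type*} [Field K] [AddCommGroup V]
    [Module K V] {A : Module.End K V} {f h : V} {α i : K} (hi : i * i = -1)
    (hAf : A f = α • f) (hAh : A h = (2 : K) • f + α • h) (r : K) :
    A.IsNormalFormPair i (r • (f + h)) ((i * r) • (h - f)) := by
  refine Or.inr ⟨α, ?_, ?_⟩
  · rw [map_smul, map_add, hAf, hAh]
    match_scalars
    · linear_combination r * hi
    · linear_combination (-r) * hi
  · rw [map_smul, map_sub, hAf, hAh]
    match_scalars <;> ring

namespace LinearMap.BilinForm

variable {K V : Type*} [Field K] [AddCommGroup V] [Module K V] (g : LinearMap.BilinForm K V)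

def IsOrthonormal {ι : Type*} [DecidableEq ι] (v : ι → V) : Prop :=
  ∀ i j, g (v i) (v j) = if i = j then 1 else 0

variable {g}

theorem isOrthonormal_pair_iff (hg : g.IsSymm) {a c : V} :
    g.IsOrthonormal ![a, c] ↔ g a a = 1 ∧ g c c = 1 ∧ g a c = 0 := by
  refine ⟨fun h => ⟨h 0 0, h 1 1, h 0 1⟩, fun ⟨haa, hcc, hac⟩ i j => ?_⟩
  have hca : g c a = 0 := hg.eq c a ▸ hac
  fin_cases i <;> fin_cases j <;> simp [haa, hcc, hac, hca]

section Biorthogonal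

variable {ι : Type*} [Fintype ι] [DecidableEq ι] {b b' : ι → V}
  (hb : ∀ i j, g (b' i) (b j) = if i = j then 1 else 0)
include hb

theorem apply_sum_smul_of_biorthogonal (c : ι → K) (i : ι) : g (b' i) (∑ j, c j • b j) = c i := by
  simp [map_sum, hb]

theorem linearIndependent_of_biorthogonal : LinearIndependent K b :=
  Fintype.linearIndependent_iff.mpr fun c hc i => by
    simpa [hc] using (apply_sum_smul_of_biorthogonal hb c i).symm

theorem sum_apply_smul_of_biorthogonal [Nonempty ι] (hcard : Fintype.card ι = finrank K V) (y : V) :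
    ∑ i, g (b' i) y • b i = y := by
  set e := basisOfLinearIndependentOfCardEqFinrank (linearIndependent_of_biorthogonal hb) hcard
  have hy : ∑ j, e.repr y j • b j = y := by
    simpa [e] using e.sum_repr y
  calc ∑ i, g (b' i) y • b i = ∑ i, e.repr y i • b i := by
        congr! with i
        conv_lhs => rw [← hy]
        exact apply_sum_smul_of_biorthogonal hb _ i
    _ = y := hy

end Biorthogonal

theorem IsOrthonormal.exists_basis_coe_eq {ι : Type*} [Fintype ι] [DecidableEq ι] [Nonempty ι]
    {v : ι → V} (hv : g.IsOrthonormal v) (hcard : Fintype.card ι = finrank K V) :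
    ∃ e : Basis ι K V, ⇑e = v :=
  ⟨basisOfLinearIndependentOfCardEqFinrank (linearIndependent_of_biorthogonal hv) hcard,
    coe_basisOfLinearIndependentOfCardEqFinrank _ _⟩

theorem exists_apply_smul_self_eq_one [IsAlgClosed K] {v : V} (hv : g v v ≠ 0) :
    ∃ t : K, g (t • v) (t • v) = 1 := by
  obtain ⟨s, hs⟩ := IsAlgClosed.exists_eq_mul_self (g v v)
  have hs0 : s ≠ 0 := by rintro rfl; simp_all
  refine ⟨s⁻¹, ?_⟩
  simp only [map_smul, LinearMap.smul_apply, smul_eq_mul, hs]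
  field_simp

theorem exists_hyperbolic_partner [NeZero (2 : K)] (hg : g.IsSymm) (hsep : g.SeparatingLeft)
    {v : V} (hv : v ≠ 0) (hvv : g v v = 0) : ∃ w, g v w = 1 ∧ g w w = 0 := by
  obtain ⟨u, hu⟩ : ∃ u, g v u ≠ 0 := by
    by_contra! h
    exact hv (hsep v h)
  set u' := (g v u)⁻¹ • u
  have hvu' : g v u' = 1 := by simp [u', hu]
  have hu'v : g u' v = 1 := hg.eq v u' ▸ hvu'
  refine ⟨u' - (g u' u' / 2) • v, ?_, ?_⟩
  · simp [hvu', hvv]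
  · simp only [map_sub, map_smul, LinearMap.sub_apply, LinearMap.smul_apply, smul_eq_mul,
      hvu', hu'v, hvv]
    field_simp
    ring

theorem isOrthonormal_of_hyperbolic (hg : g.IsSymm) {f h : V} (hff : g f f = 0) (hhh : g h h = 0)
    (hfh : g f h = 1) {r i : K} (hr : 2 * (r * r) = 1) (hi : i * i = -1) :
    g.IsOrthonormal ![r • (f + h), (i * r) • (h - f)] := by
  have hhf : g h f = 1 := hg.eq f h ▸ hfh
  rw [isOrthonormal_pair_iff hg]
  simp only [map_add, map_sub, map_smul, LinearMap.add_apply, LinearMap.sub_apply,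
    LinearMap.smul_apply, smul_eq_mul, hff, hhh, hfh, hhf]
  refine ⟨?_, ?_, ?_⟩
  · linear_combination hr
  · linear_combination (-2 * r * r) * hi + hr
  · ring

theorem exists_isOrthonormal_eigenvector_of_eigenvector [IsAlgClosed K] [FiniteDimensional K V]
    (hg : g.IsSymm) (hsep : g.SeparatingLeft) (hdim : finrank K V = 2) {A : Module.End K V}
    (hA : IsAdjointPair g g A A) {a : V} {α : K} (hAa : A a = α • a) (haa : g a a = 1) :
    ∃ (c : V) (β : K), g.IsOrthonormal ![a, c] ∧ A c = β • c := by
  obtain ⟨w, hw0, hker⟩ := Module.Dual.exists_ker_eq_span_singleton hdim (f := g a)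
    fun h => by simpa [haa] using LinearMap.congr_fun h a
  have haw : g a w = 0 := LinearMap.mem_ker.mp (hker ▸ Submodule.mem_span_singleton_self w)
  have hspan (x : V) (hx : g a x = 0) : ∃ s : K, s • w = x :=
    Submodule.mem_span_singleton.mp (hker ▸ hx)
  have hwa : g w a = 0 := hg.eq a w ▸ haw
  have hww : g w w ≠ 0 := by
    intro hww
    refine hw0 (hsep w fun y => ?_)
    obtain ⟨s, hs⟩ := hspan (y - g a y • a) (by simp [haa])
    rw [show y = g a y • a + s • w by rw [hs]; abel]
    simp [hwa, hww]
  obtain ⟨t, ht⟩ := exists_apply_smul_self_eq_one hww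
  obtain ⟨β, hβ⟩ := hspan (A w) (by rw [← hA, hAa]; simp [haw])
  refine ⟨t • w, β, (isOrthonormal_pair_iff hg).mpr ⟨haa, ht, by simp [haw]⟩, ?_⟩
  rw [map_smul, ← hβ, smul_comm]

theorem exists_isOrthonormal_isNormalFormPair_of_hyperbolic [IsAlgClosed K] [NeZero (2 : K)]
    (hg : g.IsSymm) {A : Module.End K V} {f h : V} (hff : g f f = 0) (hhh : g h h = 0)
    (hfh : g f h = 1) {α μ : K} (hAf : A f = α • f) (hAh : A h = μ • f + α • h) {i : K}
    (hi : i * i = -1) : ∃ a c, g.IsOrthonormal ![a, c] ∧ A.IsNormalFormPair i a c := by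
  obtain ⟨r, hr⟩ := IsAlgClosed.exists_eq_mul_self (2⁻¹ : K)
  have hr : 2 * (r * r) = 1 := by rw [← hr]; field_simp
  by_cases hμ : μ = 0
  · refine ⟨_, _, isOrthonormal_of_hyperbolic hg hff hhh hfh hr hi, Or.inl ⟨α, α, ?_, ?_⟩⟩
    all_goals simp only [map_smul, map_add, map_sub, hAf, hAh, hμ]; module
  -- rescaling the hyperbolic pair to `(t • f, t⁻¹ • h)` with `t ^ 2 = μ / 2` makes `μ = 2`
  obtain ⟨t, ht⟩ := IsAlgClosed.exists_eq_mul_self (μ / 2)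
  have ht0 : t ≠ 0 := by rintro rfl; simp_all
  have hAh' : A (t⁻¹ • h) = (2 : K) • (t • f) + α • (t⁻¹ • h) := by
    have hμt : t⁻¹ * μ = 2 * t := by
      rw [show μ = 2 * (t * t) by rw [← ht]; field_simp]
      field_simp
    rw [map_smul, hAh, smul_add, smul_smul, hμt]
    module
  refine ⟨_, _, isOrthonormal_of_hyperbolic hg (f := t • f) (h := t⁻¹ • h) (by simp [hff])
    (by simp [hhh]) (by simp [hfh, ht0]) hr hi, isNormalFormPair_of_jordan hi ?_ hAh' r⟩
  rw [map_smul, hAf, smul_comm]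

theorem exists_isOrthonormal_isNormalFormPair_of_isotropic [IsAlgClosed K] [NeZero (2 : K)]
    (hg : g.IsSymm) (hsep : g.SeparatingLeft) (hdim : finrank K V = 2) {A : Module.End K V}
    (hA : IsAdjointPair g g A A) {v : V} {α : K} (hAv : A v = α • v) (hv0 : v ≠ 0)
    (hvv : g v v = 0) {i : K} (hi : i * i = -1) :
    ∃ a c, g.IsOrthonormal ![a, c] ∧ A.IsNormalFormPair i a c := by
  obtain ⟨w, hvw, hww⟩ := exists_hyperbolic_partner hg hsep hv0 hvv
  have hwv : g w v = 1 := hg.eq v w ▸ hvw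
  have hAw : g w (A w) • v + g v (A w) • w = A w := by
    simpa [Fin.sum_univ_two] using sum_apply_smul_of_biorthogonal (g := g) (b := ![v, w]) (b' := ![w, v])
      (by intro i j; fin_cases i <;> fin_cases j <;> simp [hvv, hww, hvw, hwv])
      (by simp [hdim]) (A w)
  have hα : g v (A w) = α := by rw [← hA, hAv]; simp [hvw]
  exact exists_isOrthonormal_isNormalFormPair_of_hyperbolic hg hvv hww hvw hAv
    (by rw [← hAw, hα]) hi

theorem exists_isOrthonormal_isNormalFormPair [IsAlgClosed K] [NeZero (2 : K)]
    [FiniteDimensional K V] (hg : g.IsSymm) (hsep : g.SeparatingLeft) (hdim : finrank K V = 2)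
    {A : Module.End K V} (hA : IsAdjointPair g g A A) {i : K} (hi : i * i = -1) :
    ∃ a c, g.IsOrthonormal ![a, c] ∧ A.IsNormalFormPair i a c := by
  have : Nontrivial V := Module.nontrivial_of_finrank_pos (hdim ▸ two_pos)
  obtain ⟨α, hα⟩ := A.exists_eigenvalue
  obtain ⟨v, hv⟩ := hα.exists_hasEigenvector
  by_cases hvv : g v v = 0
  · exact exists_isOrthonormal_isNormalFormPair_of_isotropic hg hsep hdim hA hv.apply_eq_smul
      hv.2 hvv hi
  obtain ⟨t, ht⟩ := exists_apply_smul_self_eq_one hvv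
  have hAtv : A (t • v) = α • t • v := by rw [map_smul, hv.apply_eq_smul, smul_comm]
  obtain ⟨c, β, hON, hAc⟩ := exists_isOrthonormal_eigenvector_of_eigenvector hg hsep hdim hA hAtv ht
  exact ⟨_, c, hON, Or.inl ⟨α, β, hAtv, hAc⟩⟩

end LinearMap.BilinForm

theorem stmt_4_general {V : Type*} [AddCommGroup V] [Module ℂ V]
    (hdim : Module.finrank ℂ V = 2)
    (g : LinearMap.BilinForm ℂ V)
    (hsymm : ∀ x y : V, g x y = g y x)
    (hnd : ∀ x : V, (∀ y : V, g x y = 0) → x = 0)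
    (A : V →ₗ[ℂ] V)
    (hA : ∀ x y : V, g (A x) y = g x (A y)) :
    ∃ e : Module.Basis (Fin 2) ℂ V,
      (∀ i j, g (e i) (e j) = if i = j then 1 else 0) ∧
      ((∃ α β : ℂ, A (e 0) = α • e 0 ∧ A (e 1) = β • e 1) ∨
        (∃ α : ℂ, A (e 0) = (α + 1) • e 0 + Complex.I • e 1 ∧
          A (e 1) = Complex.I • e 0 + (α - 1) • e 1)) := by
  have : FiniteDimensional ℂ V := Module.finite_of_finrank_eq_succ hdim
  obtain ⟨a, c, hON, hNF⟩ :=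
    g.exists_isOrthonormal_isNormalFormPair ⟨hsymm⟩ hnd hdim hA Complex.I_mul_I
  obtain ⟨e, he⟩ := hON.exists_basis_coe_eq (by simp [hdim])
  refine ⟨e, he ▸ hON, ?_⟩
  simpa [he, IsNormalFormPair] using hNF

/-- Normal forms of a g-symmetric operator on a 2-dimensional holomorphic inner
product space. -/
theorem stmt_4 {V : Type*} [AddCommGroup V] [Module ℂ V] [FiniteDimensional ℂ V]
    (hdim : Module.finrank ℂ V = 2)
    (g : LinearMap.BilinForm ℂ V)
    (hsymm : ∀ x y : V, g x y = g y x)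
    (hnd : ∀ x : V, (∀ y : V, g x y = 0) → x = 0)
    (A : V →ₗ[ℂ] V)
    (hA : ∀ x y : V, g (A x) y = g x (A y)) :
    ∃ e : Module.Basis (Fin 2) ℂ V,
      (∀ i j, g (e i) (e j) = if i = j then 1 else 0) ∧
      ((∃ α β : ℂ, A (e 0) = α • e 0 ∧ A (e 1) = β • e 1) ∨
        (∃ α : ℂ, A (e 0) = (α + 1) • e 0 + Complex.I • e 1 ∧
          A (e 1) = Complex.I • e 0 + (α - 1) • e 1)) :=
  stmt_4_general hdim g hsymm hnd A hA
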